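/- arXiv:1804.01330 — 3 statements merged into one kernel-verified Lean document; each statement's English description precedes it below -/
import Mathlib

section
/- For each m ∈ ℕ, let T_m be a row-stochastic matrix of the form T_m(x,y) = (s·A_m(x,y) + n_xy^(m))/(s + n_x^(m)) with A_m row-stochastic, s ≥ 0, nonnegative integers n_xy^(m) summing over y to n_x^(m), and set Q_m := (T_m − I)/δ^(m) with δ^(m) := t_max/m. Suppose A_m → A, n_xy^(m) → n_xy for all x ≠ y (eventually constant), and δ^(m)·n_x^(m) → d_x > 0 for all x. Then Q_m converges entrywise to the matrix Q with Q(x,y) = (s·A(x,y) + n_xy)/d_x for x ≠ y and Q(x,x) = −Σ_{y≠x} Q(x,y). -/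
open Finset Filter

/-- discrete-time posterior-mean estimators converge to the
continuous-time one. With `T_m(x,y) = (s·A_m(x,y)+n_xy⁽ᵐ⁾)/(s+n_x⁽ᵐ⁾)` and
`Q_m = (T_m − I)/δ⁽ᵐ⁾`, `δ⁽ᵐ⁾ = tmax/m`, if `A_m → A` entrywise, the
off-diagonal counts `n_xy⁽ᵐ⁾` are eventually equal to `n_xy`, and
`δ⁽ᵐ⁾·n_x⁽ᵐ⁾ → d_x > 0`, then `Q_m` converges entrywise to the matrix `Q` with
`Q(x,y) = (s·A(x,y)+n_xy)/d_x` off-diagonal and zero row sums. -/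
theorem stmt_10 (S : Type*) [Fintype S] [DecidableEq S]
    (tmax : ℝ) (htmax : 0 < tmax) (s : ℝ) (hs : 0 ≤ s)
    (A : ℕ → Matrix S S ℝ)
    (hApos : ∀ m x y, 0 ≤ A m x y) (hArow : ∀ m x, ∑ y, A m x y = 1)
    (Alim : Matrix S S ℝ)
    (hAlim : ∀ x y, Tendsto (fun m => A m x y) atTop (nhds (Alim x y)))
    (ndisc : ℕ → S → S → ℕ)
    (nrow : ℕ → S → ℕ) (hnrow : ∀ m x, nrow m x = ∑ y, ndisc m x y)
    (n : S → S → ℝ)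
    (hn : ∀ x y, x ≠ y → ∀ᶠ m in atTop, (ndisc m x y : ℝ) = n x y)
    (d : S → ℝ) (hd : ∀ x, 0 < d x)
    (hdn : ∀ x, Tendsto (fun m : ℕ => (tmax / m) * (nrow m x : ℝ)) atTop (nhds (d x)))
    (T : ℕ → Matrix S S ℝ)
    (hT : ∀ m x y, T m x y = (s * A m x y + (ndisc m x y : ℝ)) / (s + (nrow m x : ℝ)))
    (Q : ℕ → Matrix S S ℝ)
    (hQ : ∀ m x y, Q m x y =
      (T m x y - (if x = y then (1 : ℝ) else 0)) / (tmax / m))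
    (Qlim : Matrix S S ℝ)
    (hQlim : ∀ x y, Qlim x y =
      if x = y then -∑ z ∈ Finset.univ.erase x, (s * Alim x z + n x z) / d x
      else (s * Alim x y + n x y) / d x) :
    ∀ x y, Tendsto (fun m => Q m x y) atTop (nhds (Qlim x y)) := by
  have hδ0 : Tendsto (fun m : ℕ => tmax / m) atTop (nhds 0) :=
    tendsto_const_nhds.div_atTop tendsto_natCast_atTop_atTop
  have hoff : ∀ x y, x ≠ y →
      Tendsto (fun m => Q m x y) atTop (nhds ((s * Alim x y + n x y) / d x)) := by
    intro x y hxy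
    have hden : Tendsto (fun m : ℕ => (tmax / m) * (s + (nrow m x : ℝ))) atTop
        (nhds (d x)) := by
      have h := (hδ0.mul_const s).add (hdn x)
      simp only [zero_mul, zero_add] at h
      refine h.congr fun m => ?_
      ring
    have hnum : Tendsto (fun m : ℕ => s * A m x y + (ndisc m x y : ℝ)) atTop
        (nhds (s * Alim x y + n x y)) := by
      refine Tendsto.add ((hAlim x y).const_mul s) ?_
      exact Tendsto.congr' ((hn x y hxy).mono fun m hm => hm.symm) tendsto_const_nhds
    refine (hnum.div hden (ne_of_gt (hd x))).congr fun m => ?_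
    rw [hQ, hT, if_neg hxy, sub_zero, div_div]
    simp only [Pi.div_apply]
    ring_nf
  intro x y
  rcases eq_or_ne x y with rfl | hxy
  · have hev : ∀ᶠ m in atTop, Q m x x = -∑ z ∈ Finset.univ.erase x, Q m x z := by
      have h1 : ∀ᶠ m in atTop, (0:ℝ) < (tmax / m) * (nrow m x : ℝ) :=
        (hdn x).eventually (eventually_gt_nhds (hd x))
      filter_upwards [h1] with m hm
      have hnx0 : (0:ℝ) < (nrow m x : ℝ) := by
        rcases lt_or_ge 0 ((nrow m x : ℝ)) with h | h
        · exact h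
        · exfalso; nlinarith [div_nonneg htmax.le (Nat.cast_nonneg m)]
      have hsn : s + (nrow m x : ℝ) ≠ 0 := by positivity
      have hrow : ∑ z, T m x z = 1 := by
        have hcast : ∑ z, (ndisc m x z : ℝ) = (nrow m x : ℝ) := by
          rw [hnrow]; push_cast; ring
        simp only [hT]
        rw [← Finset.sum_div, Finset.sum_add_distrib, ← Finset.mul_sum, hArow, hcast,
          mul_one, div_self hsn]
      have herase : ∑ z ∈ Finset.univ.erase x, T m x z = 1 - T m x x := by
        have := Finset.add_sum_erase Finset.univ (fun z => T m x z) (Finset.mem_univ x)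
        rw [hrow] at this
        linarith
      have : ∑ z ∈ Finset.univ.erase x, Q m x z = (1 - T m x x) / (tmax / m) := by
        rw [← herase, Finset.sum_div]
        refine Finset.sum_congr rfl fun z hz => ?_
        rw [hQ, if_neg (Finset.ne_of_mem_erase hz).symm, sub_zero]
      rw [this, hQ, if_pos rfl]
      rw [← neg_div]
      ring_nf
    have hsum : Tendsto (fun m => -∑ z ∈ Finset.univ.erase x, Q m x z) atTop
        (nhds (-∑ z ∈ Finset.univ.erase x, (s * Alim x z + n x z) / d x)) := by
      refine Tendsto.neg ?_
      exact tendsto_finset_sum _ fun z hz => hoff x z (Finset.ne_of_mem_erase hz).symm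
    rw [hQlim, if_pos rfl]
    exact Tendsto.congr' (hev.mono fun m hm => hm.symm) hsum
  · rw [hQlim, if_neg hxy]
    exact hoff x y hxy
end

section
/- Inner limit inclusion (Theorem 3, part 1): Let 𝒬_s^(m) := {(T − I)/δ^(m) : T(x,y) = (s·A(x,y)+n_xy^(m))/(s+n_x^(m)), A ∈ int(𝕋)} and 𝒬_s := {Q : Q(x,y) = (s·A(x,y)+n_xy)/d_x off-diagonal, row sums zero, A ∈ 𝕋}. Assume for each pair x≠y that n_xy^(m) = n_xy for all sufficiently large m, and that δ^(m)·n_x^(m) → d_x > 0 where δ^(m) = t_max/m. Then every Q ∈ 𝒬_s is the limit of a sequence (Q_m) with Q_m ∈ 𝒬_s^(m); i.e., 𝒬_s ⊆ liminf_{m→∞} 𝒬_s^(m) (Painlevé–Kuratowski inner limit). -/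
open Finset Filter Topology

/-!
Mixing `A` with a vanishing multiple of the uniform stochastic matrix gives stochastic matrices
with positive entries converging to `A`; feed them into the posterior transition matrices `T⁽ᵐ⁾`.
Off the diagonal, `(T⁽ᵐ⁾ - 1) / δ⁽ᵐ⁾` has entries `(s·A⁽ᵐ⁾ + n⁽ᵐ⁾) / ((s + n_x⁽ᵐ⁾)·δ⁽ᵐ⁾)`,
whose numerators and denominators converge to `s·A + n` and `d_x`. Both these generators and
the limit have zero row sums, so convergence on the diagonal follows from convergence off it;
the row sums of `T⁽ᵐ⁾` are `1` once `s + n_x⁽ᵐ⁾ ≠ 0`, which holds eventually because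
`(s + n_x⁽ᵐ⁾)·δ⁽ᵐ⁾ → d_x ≠ 0`.
-/

section RowSums

variable {ι : Type*} [Fintype ι] [DecidableEq ι] {R : Type*}

theorem Matrix.diag_eq_neg_sum_erase_of_sum_row_eq_zero [AddCommGroup R] {M : Matrix ι ι R}
    {x : ι} (h : ∑ y, M x y = 0) : M x x = -∑ z ∈ univ.erase x, M x z :=
  eq_neg_of_add_eq_zero_left ((add_sum_erase _ _ (mem_univ x)).trans h)

theorem Matrix.sum_row_smul_sub_one_eq_zero [Ring R] {T : Matrix ι ι R} {x : ι}
    (h : ∑ y, T x y = 1) (c : R) : ∑ y, (c • (T - 1)) x y = 0 := by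
  simp only [Matrix.smul_apply, Matrix.sub_apply, Matrix.one_apply, smul_eq_mul, ← mul_sum,
    sum_sub_distrib, h, sum_ite_eq, mem_univ, if_true, sub_self, mul_zero]

theorem Matrix.tendsto_of_tendsto_offDiag [AddCommGroup R] [TopologicalSpace R]
    [IsTopologicalAddGroup R] {α : Type*} {l : Filter α} {M : α → Matrix ι ι R}
    {Q : Matrix ι ι R} (hM : ∀ᶠ a in l, ∀ x, ∑ y, M a x y = 0)
    (hQ : ∀ x, Q x x = -∑ z ∈ univ.erase x, Q x z)
    (hoff : ∀ x y, x ≠ y → Tendsto (fun a => M a x y) l (𝓝 (Q x y))) :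
    Tendsto M l (𝓝 Q) := by
  refine tendsto_pi_nhds.2 fun x => tendsto_pi_nhds.2 fun y => ?_
  rcases eq_or_ne x y with rfl | hxy
  · rw [hQ]
    refine (tendsto_finsetSum _ fun z hz => hoff x z (ne_of_mem_erase hz).symm).neg.congr' ?_
    filter_upwards [hM] with a ha
    exact (Matrix.diag_eq_neg_sum_erase_of_sum_row_eq_zero (ha x)).symm
  · exact hoff x y hxy

end RowSums

theorem exists_seq_pos_sum_row_eq_one_tendsto {ι κ : Type*} [Fintype κ] {A : Matrix ι κ ℝ}
    (hA0 : ∀ x y, 0 ≤ A x y) (hA1 : ∀ x, ∑ y, A x y = 1) :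
    ∃ B : ℕ → Matrix ι κ ℝ, (∀ m x y, 0 < B m x y) ∧ (∀ m x, ∑ y, B m x y = 1) ∧
      Tendsto B atTop (𝓝 A) := by
  set ε : ℕ → ℝ := fun m => 1 / ((m : ℝ) + 1)
  set U : Matrix ι κ ℝ := Matrix.of fun _ _ => (Fintype.card κ : ℝ)⁻¹
  have hε0 : ∀ m, 0 < ε m := fun m => by positivity
  have hε1 : ∀ m, ε m ≤ 1 := fun m => div_le_one_of_le₀ (by simp) (by positivity)
  have hε : Tendsto ε atTop (𝓝 0) := tendsto_one_div_add_atTop_nhds_zero_nat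
  refine ⟨fun m => (1 - ε m) • A + ε m • U, fun m x y => ?_, fun m x => ?_, ?_⟩
  · have hcard : 0 < Fintype.card κ := Fintype.card_pos_iff.2 ⟨y⟩
    have := mul_nonneg (sub_nonneg.2 (hε1 m)) (hA0 x y)
    have := mul_pos (hε0 m) (inv_pos.2 (Nat.cast_pos.2 hcard))
    simp only [Matrix.add_apply, Matrix.smul_apply, smul_eq_mul, U, Matrix.of_apply]
    linarith
  · have : Nonempty κ := by
      by_contra hκ
      simpa [not_nonempty_iff.1 hκ] using hA1 x
    have hcard : (Fintype.card κ : ℝ) ≠ 0 := Nat.cast_ne_zero.2 Fintype.card_ne_zero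
    simp only [Matrix.add_apply, Matrix.smul_apply, smul_eq_mul, sum_add_distrib, ← mul_sum,
      hA1, U, Matrix.of_apply, sum_const, card_univ, nsmul_eq_mul, mul_inv_cancel₀ hcard]
    ring
  · simpa using (((tendsto_const_nhds (x := (1 : ℝ))).sub hε).smul_const A).add
      (hε.smul_const U)

section Posterior

variable {S : Type*} [Fintype S]

noncomputable def posteriorTransition (s : ℝ) (N : S → S → ℝ) (A : Matrix S S ℝ) :
    Matrix S S ℝ :=
  Matrix.of fun x y => (s * A x y + N x y) / (s + ∑ z, N x z)

theorem sum_posteriorTransition_row {s : ℝ} {N : S → S → ℝ} {A : Matrix S S ℝ} {x : S}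
    (hA : ∑ y, A x y = 1) (hN : s + ∑ z, N x z ≠ 0) :
    ∑ y, posteriorTransition s N A x y = 1 := by
  simp only [posteriorTransition, Matrix.of_apply, ← sum_div, sum_add_distrib, ← mul_sum, hA,
    mul_one, div_self hN]

theorem smul_posteriorTransition_sub_one_apply_of_ne [DecidableEq S] (δ s : ℝ)
    (N : S → S → ℝ) (A : Matrix S S ℝ) {x y : S} (hxy : x ≠ y) :
    (δ⁻¹ • (posteriorTransition s N A - 1)) x y =
      (s * A x y + N x y) / ((s + ∑ z, N x z) * δ) := by
  rw [Matrix.smul_apply, Matrix.sub_apply, Matrix.one_apply_ne hxy, sub_zero, smul_eq_mul,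
    posteriorTransition, Matrix.of_apply, div_mul_eq_div_div]
  exact (div_eq_inv_mul _ _).symm

end Posterior

theorem stmt_12_general (S : Type*) [Fintype S] [DecidableEq S]
    (tmax : ℝ) (s : ℝ)
    (ndisc : ℕ → S → S → ℕ)
    (nrow : ℕ → S → ℕ) (hnrow : ∀ m x, nrow m x = ∑ y, ndisc m x y)
    (n : S → S → ℝ)
    (hn : ∀ x y, x ≠ y → ∀ᶠ m in atTop, (ndisc m x y : ℝ) = n x y)
    (d : S → ℝ) (hd : ∀ x, 0 < d x)
    (hdn : ∀ x, Tendsto (fun m : ℕ => (tmax / m) * (nrow m x : ℝ)) atTop (nhds (d x)))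
    (Qs : Set (Matrix S S ℝ))
    (hQs : Qs = {Q | ∃ A : Matrix S S ℝ,
      (∀ x y, 0 ≤ A x y) ∧ (∀ x, ∑ y, A x y = 1) ∧
      (∀ x y, Q x y =
        if x = y then -∑ z ∈ Finset.univ.erase x, (s * A x z + n x z) / d x
        else (s * A x y + n x y) / d x)})
    (Qsm : ℕ → Set (Matrix S S ℝ))
    (hQsm : ∀ m, Qsm m = {Q | ∃ A : Matrix S S ℝ,
      (∀ x y, 0 < A x y) ∧ (∀ x, ∑ y, A x y = 1) ∧
      (∀ x y, Q x y =
        ((s * A x y + (ndisc m x y : ℝ)) / (s + (nrow m x : ℝ))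
          - (if x = y then (1 : ℝ) else 0)) / (tmax / m))}) :
    ∀ Q ∈ Qs, ∃ Qseq : ℕ → Matrix S S ℝ,
      (∀ m : ℕ, 0 < m → Qseq m ∈ Qsm m) ∧
      Tendsto Qseq atTop (nhds Q) := by
  intro Q hQ
  rw [hQs] at hQ
  obtain ⟨A, hA0, hA1, hQA⟩ := hQ
  obtain ⟨B, hB0, hB1, hBA⟩ := exists_seq_pos_sum_row_eq_one_tendsto hA0 hA1
  have hrow : ∀ m x, (nrow m x : ℝ) = ∑ y, (ndisc m x y : ℝ) := fun m x => by
    rw [hnrow]; push_cast; rfl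
  have hδ : Tendsto (fun m : ℕ => tmax / m) atTop (𝓝 0) :=
    tendsto_const_nhds.div_atTop tendsto_natCast_atTop_atTop
  have hden : ∀ x, Tendsto (fun m : ℕ => (s + ∑ y, (ndisc m x y : ℝ)) * (tmax / m)) atTop
      (𝓝 (d x)) := fun x => by
    simpa only [mul_zero, zero_add, add_mul, mul_comm (tmax / _), hrow] using
      (hδ.const_mul s).add (hdn x)
  have hden_ne : ∀ᶠ m in atTop, ∀ x, s + ∑ y, (ndisc m x y : ℝ) ≠ 0 :=
    eventually_all.2 fun x => ((hden x).eventually_ne (hd x).ne').mono fun _ h =>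
      left_ne_zero_of_mul h
  refine ⟨fun m => (tmax / m)⁻¹ • (posteriorTransition s (fun x y => ndisc m x y) (B m) - 1),
    fun m _ => ?_, ?_⟩
  · rw [hQsm]
    refine ⟨B m, hB0 m, hB1 m, fun x y => ?_⟩
    simp [posteriorTransition, Matrix.one_apply, hrow, div_eq_inv_mul]
  refine Matrix.tendsto_of_tendsto_offDiag ?_ (fun x => ?_) (fun x y hxy => ?_)
  · filter_upwards [hden_ne] with m hm x
    exact Matrix.sum_row_smul_sub_one_eq_zero (sum_posteriorTransition_row (hB1 m x) (hm x)) _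
  · rw [hQA, if_pos rfl]
    exact congrArg Neg.neg (sum_congr rfl fun z hz => by
      rw [hQA, if_neg (ne_of_mem_erase hz).symm])
  · have hnum : Tendsto (fun m => s * B m x y + ndisc m x y) atTop (𝓝 (s * A x y + n x y)) :=
      ((hBA.apply_nhds x).apply_nhds y |>.const_mul s).add
        (tendsto_const_nhds.congr' ((hn x y hxy).mono fun _ h => h.symm))
    rw [hQA, if_neg hxy]
    exact (hnum.div (hden x) (hd x).ne').congr fun m =>
      (smul_posteriorTransition_sub_one_apply_of_ne _ _ _ _ hxy).symm

/-- Theorem 3, inner limit inclusion: every `Q ∈ 𝒬ₛ` is the limit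
of a sequence `(Q_m)` with `Q_m ∈ 𝒬ₛ⁽ᵐ⁾` for all `m ≥ 1`, where
`𝒬ₛ⁽ᵐ⁾ = {(T−I)/δ⁽ᵐ⁾ : T(x,y) = (s·A(x,y)+n_xy⁽ᵐ⁾)/(s+n_x⁽ᵐ⁾), A ∈ int(𝕋)}`
and `𝒬ₛ = {Q_A : A ∈ 𝕋}`, assuming the off-diagonal counts `n_xy⁽ᵐ⁾` are
eventually equal to `n_xy` and `δ⁽ᵐ⁾·n_x⁽ᵐ⁾ → d_x > 0` with `δ⁽ᵐ⁾ = tmax/m`. -/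
theorem stmt_12 (S : Type*) [Fintype S] [DecidableEq S]
    (tmax : ℝ) (htmax : 0 < tmax) (s : ℝ) (hs : 0 ≤ s)
    (ndisc : ℕ → S → S → ℕ)
    (nrow : ℕ → S → ℕ) (hnrow : ∀ m x, nrow m x = ∑ y, ndisc m x y)
    (n : S → S → ℝ)
    (hn : ∀ x y, x ≠ y → ∀ᶠ m in atTop, (ndisc m x y : ℝ) = n x y)
    (d : S → ℝ) (hd : ∀ x, 0 < d x)
    (hdn : ∀ x, Tendsto (fun m : ℕ => (tmax / m) * (nrow m x : ℝ)) atTop (nhds (d x)))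
    (Qs : Set (Matrix S S ℝ))
    (hQs : Qs = {Q | ∃ A : Matrix S S ℝ,
      (∀ x y, 0 ≤ A x y) ∧ (∀ x, ∑ y, A x y = 1) ∧
      (∀ x y, Q x y =
        if x = y then -∑ z ∈ Finset.univ.erase x, (s * A x z + n x z) / d x
        else (s * A x y + n x y) / d x)})
    (Qsm : ℕ → Set (Matrix S S ℝ))
    (hQsm : ∀ m, Qsm m = {Q | ∃ A : Matrix S S ℝ,
      (∀ x y, 0 < A x y) ∧ (∀ x, ∑ y, A x y = 1) ∧
      (∀ x y, Q x y =
        ((s * A x y + (ndisc m x y : ℝ)) / (s + (nrow m x : ℝ))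
          - (if x = y then (1 : ℝ) else 0)) / (tmax / m))}) :
    ∀ Q ∈ Qs, ∃ Qseq : ℕ → Matrix S S ℝ,
      (∀ m : ℕ, 0 < m → Qseq m ∈ Qsm m) ∧
      Tendsto Qseq atTop (nhds Q) :=
  stmt_12_general S tmax s ndisc nrow hnrow n hn d hd hdn Qs hQs Qsm hQsm
end

section
/- Outer limit inclusion (Theorem 3, part 2): with the same setup as the inner limit inclusion, every accumulation point of sequences (Q_m)_{m∈ℕ} with Q_m ∈ 𝒬_s^(m) belongs to 𝒬_s; i.e., limsup_{m→∞} 𝒬_s^(m) ⊆ 𝒬_s (Painlevé–Kuratowski outer limit). -/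
/-!
Write `rateGenerator R D` for the matrix with off-diagonal entries `R x y / D x` and zero row
sums, so that `Q_A = rateGenerator (s • A + n) d`. If the rows of `P` sum to `b`, then
`(P / b - I) / δ = rateGenerator P (δ • b)`; hence, once the off-diagonal counts have become
`n`, every element of `𝒬ₛ⁽ᵐ⁾` is `rateGenerator (s • A + n) (δ⁽ᵐ⁾ (s + n⁽ᵐ⁾))`, with
`δ⁽ᵐ⁾ (s + n_x⁽ᵐ⁾) → d_x ≠ 0`. Along a convergent subsequence the stochastic matrices `A`
converge (row-stochastic matrices form a compact set) to some `A₀`, and by continuity of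
`rateGenerator` in both arguments the limit is `Q_{A₀}`.
-/

open Finset Filter Topology

instance Matrix.firstCountableTopology {m n R : Type*} [Countable m] [Countable n]
    [TopologicalSpace R] [FirstCountableTopology R] : FirstCountableTopology (Matrix m n R) :=
  inferInstanceAs (FirstCountableTopology (m → n → R))

section Generators

variable {S : Type*} [Fintype S] [DecidableEq S]

namespace Matrix

theorem isCompact_rowStochastic : IsCompact (rowStochastic ℝ S : Set (Matrix S S ℝ)) := by
  have hbox : IsCompact (Set.univ.pi fun _ : S => Set.univ.pi fun _ : S => Set.Icc (0 : ℝ) 1) :=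
    isCompact_univ_pi fun _ => isCompact_univ_pi fun _ => isCompact_Icc
  refine hbox.of_isClosed_subset ?_ fun A hA x _ y _ =>
    ⟨nonneg_of_mem_rowStochastic hA, le_one_of_mem_rowStochastic hA⟩
  have hset : (rowStochastic ℝ S : Set (Matrix S S ℝ)) =
      (⋂ x, ⋂ y, {A : Matrix S S ℝ | 0 ≤ A x y}) ∩ ⋂ x, {A : Matrix S S ℝ | ∑ y, A x y = 1} := by
    ext A
    simp [mem_rowStochastic_iff_sum]
  rw [hset]
  refine (isClosed_iInter fun x => isClosed_iInter fun y => isClosed_le ?_ ?_).inter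
    (isClosed_iInter fun x => isClosed_eq ?_ ?_) <;> fun_prop

end Matrix

noncomputable def rateGenerator (R : Matrix S S ℝ) (D : S → ℝ) : Matrix S S ℝ :=
  Matrix.of fun x y => if x = y then -∑ z ∈ univ.erase x, R x z / D x else R x y / D x

theorem rateGenerator_congr {R R' : Matrix S S ℝ} (h : ∀ x y, x ≠ y → R x y = R' x y)
    (D : S → ℝ) : rateGenerator R D = rateGenerator R' D := by
  ext x y
  by_cases hxy : x = y
  · simp only [rateGenerator, Matrix.of_apply, if_pos hxy]
    congr 1
    exact sum_congr rfl fun z hz => by rw [h x z (ne_of_mem_erase hz).symm]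
  · simp only [rateGenerator, Matrix.of_apply, if_neg hxy, h x y hxy]

theorem rateGenerator_eq_of_sum_eq {P : Matrix S S ℝ} {b : S → ℝ} (hP : ∀ x, ∑ y, P x y = b x)
    (hb : ∀ x, b x ≠ 0) (δ : ℝ) :
    Matrix.of (fun x y => (P x y / b x - if x = y then 1 else 0) / δ) = rateGenerator P (δ • b) := by
  ext x y
  by_cases hxy : x = y
  · subst hxy
    have hoff : ∑ z ∈ univ.erase x, P x z = b x - P x x := by
      rw [sum_erase_eq_sub (mem_univ x), hP]
    simp only [rateGenerator, Matrix.of_apply, if_true, Pi.smul_apply, smul_eq_mul, ← sum_div,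
      hoff]
    field_simp [hb x]
    ring
  · simp [rateGenerator, hxy, div_div, mul_comm]

theorem tendsto_rateGenerator {ι : Type*} {l : Filter ι} {R : ι → Matrix S S ℝ}
    {D : ι → S → ℝ} {R₀ : Matrix S S ℝ} {D₀ : S → ℝ} (hR : Tendsto R l (𝓝 R₀))
    (hD : Tendsto D l (𝓝 D₀)) (hD₀ : ∀ x, D₀ x ≠ 0) :
    Tendsto (fun i => rateGenerator (R i) (D i)) l (𝓝 (rateGenerator R₀ D₀)) := by
  have hRe : ∀ x y, Tendsto (fun i => R i x y) l (𝓝 (R₀ x y)) := fun x y =>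
    tendsto_pi_nhds.1 (tendsto_pi_nhds.1 hR x) y
  have hDe : ∀ x, Tendsto (fun i => D i x) l (𝓝 (D₀ x)) := tendsto_pi_nhds.1 hD
  refine tendsto_pi_nhds.2 fun x => tendsto_pi_nhds.2 fun y => ?_
  by_cases hxy : x = y
  · simp only [rateGenerator, Matrix.of_apply, if_pos hxy]
    exact (tendsto_finsetSum _ fun z _ => (hRe x z).div (hDe x) (hD₀ x)).neg
  · simp only [rateGenerator, Matrix.of_apply, if_neg hxy]
    exact (hRe x y).div (hDe x) (hD₀ x)

section DiscreteGenerators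

variable {tmax s : ℝ} {ndisc : ℕ → S → S → ℕ} {nrow : ℕ → S → ℕ} {n : Matrix S S ℝ} {d : S → ℝ}

theorem eq_rateGenerator_of_tendsto (hnrow : ∀ m x, nrow m x = ∑ y, ndisc m x y)
    (hn : ∀ x y, x ≠ y → ∀ᶠ m in atTop, (ndisc m x y : ℝ) = n x y) (hd : ∀ x, d x ≠ 0)
    (hdn : ∀ x, Tendsto (fun m : ℕ => (tmax / m) * (nrow m x : ℝ)) atTop (𝓝 (d x)))
    {m : ℕ → ℕ} (hm : Tendsto m atTop atTop)
    {A : ℕ → Matrix S S ℝ} {A₀ : Matrix S S ℝ} (hA : ∀ k x, ∑ y, A k x y = 1)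
    (hAlim : Tendsto A atTop (𝓝 A₀))
    {Q : ℕ → Matrix S S ℝ} {Q₀ : Matrix S S ℝ}
    (hQ : ∀ k x y, Q k x y = ((s * A k x y + (ndisc (m k) x y : ℝ)) / (s + (nrow (m k) x : ℝ))
      - (if x = y then (1 : ℝ) else 0)) / (tmax / m k))
    (hQlim : Tendsto Q atTop (𝓝 Q₀)) :
    Q₀ = rateGenerator (s • A₀ + n) d := by
  set D : ℕ → S → ℝ := fun k x => tmax / m k * (s + nrow (m k) x)
  have hD : Tendsto D atTop (𝓝 d) := tendsto_pi_nhds.2 fun x => by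
    simpa [D, mul_add, Function.comp_def] using
      (((tendsto_const_div_atTop_nhds_zero_nat tmax).mul_const s).add (hdn x)).comp hm
  have hD_ne : ∀ᶠ k in atTop, ∀ x, D k x ≠ 0 :=
    eventually_all.2 fun x => (tendsto_pi_nhds.1 hD x).eventually (eventually_ne_nhds (hd x))
  have hoff : ∀ᶠ k in atTop, ∀ x y, x ≠ y → (ndisc (m k) x y : ℝ) = n x y := by
    refine eventually_all.2 fun x => eventually_all.2 fun y => ?_
    by_cases hxy : x = y
    · exact Eventually.of_forall fun _ h => absurd hxy h
    · exact (hm.eventually (hn x y hxy)).mono fun _ h _ => h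
  have hQeq : ∀ᶠ k in atTop, Q k = rateGenerator (s • A k + n) (D k) := by
    filter_upwards [hD_ne, hoff] with k hDk hnk
    have hrow : ∀ x, ∑ y, (s * A k x y + (ndisc (m k) x y : ℝ)) = s + nrow (m k) x := fun x => by
      rw [sum_add_distrib, ← mul_sum, hA, hnrow]
      push_cast
      ring
    have hb : ∀ x, s + (nrow (m k) x : ℝ) ≠ 0 := fun x => right_ne_zero_of_mul (hDk x)
    calc Q k = _ := Matrix.ext (hQ k)
      _ = _ := rateGenerator_eq_of_sum_eq (P := Matrix.of fun x y => s * A k x y + ndisc (m k) x y)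
          hrow hb _
      _ = _ := rateGenerator_congr (fun x y hxy => by simp [hnk x y hxy]) _
  exact tendsto_nhds_unique hQlim <|
    (tendsto_rateGenerator ((hAlim.const_smul s).add_const n) hD hd).congr'
      (hQeq.mono fun _ h => h.symm)

end DiscreteGenerators

end Generators

theorem stmt_13_general (S : Type*) [Fintype S] [DecidableEq S]
    (tmax : ℝ) (s : ℝ)
    (ndisc : ℕ → S → S → ℕ)
    (nrow : ℕ → S → ℕ) (hnrow : ∀ m x, nrow m x = ∑ y, ndisc m x y)
    (n : S → S → ℝ)
    (hn : ∀ x y, x ≠ y → ∀ᶠ m in atTop, (ndisc m x y : ℝ) = n x y)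
    (d : S → ℝ) (hd : ∀ x, 0 < d x)
    (hdn : ∀ x, Tendsto (fun m : ℕ => (tmax / m) * (nrow m x : ℝ)) atTop (nhds (d x)))
    (Qs : Set (Matrix S S ℝ))
    (hQs : Qs = {Q | ∃ A : Matrix S S ℝ,
      (∀ x y, 0 ≤ A x y) ∧ (∀ x, ∑ y, A x y = 1) ∧
      (∀ x y, Q x y =
        if x = y then -∑ z ∈ Finset.univ.erase x, (s * A x z + n x z) / d x
        else (s * A x y + n x y) / d x)})
    (Qsm : ℕ → Set (Matrix S S ℝ))
    (hQsm : ∀ m, Qsm m = {Q | ∃ A : Matrix S S ℝ,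
      (∀ x y, 0 < A x y) ∧ (∀ x, ∑ y, A x y = 1) ∧
      (∀ x y, Q x y =
        ((s * A x y + (ndisc m x y : ℝ)) / (s + (nrow m x : ℝ))
          - (if x = y then (1 : ℝ) else 0)) / (tmax / m))}) :
    ∀ Qseq : ℕ → Matrix S S ℝ,
      (∀ m : ℕ, 0 < m → Qseq m ∈ Qsm m) →
      ∀ (φ : ℕ → ℕ), StrictMono φ →
      ∀ Qlim : Matrix S S ℝ,
        Tendsto (fun k => Qseq (φ k)) atTop (nhds Qlim) → Qlim ∈ Qs := by
  intro Qseq hQseq φ hφ Qlim hlim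
  have hmem : ∀ k, Qseq (φ (k + 1)) ∈ Qsm (φ (k + 1)) := fun k =>
    hQseq _ ((Nat.zero_le (φ 0)).trans_lt (hφ k.succ_pos))
  simp only [hQsm, Set.mem_ofPred_eq] at hmem
  choose A hApos hAsum hAQ using hmem
  have hA_stoch : ∀ k, A k ∈ Matrix.rowStochastic ℝ S := fun k =>
    Matrix.mem_rowStochastic_iff_sum.2 ⟨fun x y => (hApos k x y).le, hAsum k⟩
  obtain ⟨A₀, hA₀, ψ, hψ, hAψ⟩ := Matrix.isCompact_rowStochastic.tendsto_subseq hA_stoch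
  have hψ' : Tendsto (fun k => ψ k + 1) atTop atTop :=
    (tendsto_add_atTop_nat 1).comp hψ.tendsto_atTop
  have hQ₀ := eq_rateGenerator_of_tendsto hnrow hn (fun x => (hd x).ne') hdn (hφ.tendsto_atTop.comp hψ')
    (fun k => hAsum (ψ k)) hAψ (fun k => hAQ (ψ k)) (hlim.comp hψ')
  rw [hQs]
  refine ⟨A₀, fun x y => Matrix.nonneg_of_mem_rowStochastic hA₀,
    Matrix.sum_row_of_mem_rowStochastic hA₀, fun x y => ?_⟩
  rw [hQ₀]
  rfl

/-- Theorem 3, outer limit inclusion: every accumulation point of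
a sequence `(Q_m)` with `Q_m ∈ 𝒬ₛ⁽ᵐ⁾` for all `m ≥ 1` belongs to `𝒬ₛ`, where
`𝒬ₛ⁽ᵐ⁾ = {(T−I)/δ⁽ᵐ⁾ : T(x,y) = (s·A(x,y)+n_xy⁽ᵐ⁾)/(s+n_x⁽ᵐ⁾), A ∈ int(𝕋)}`
and `𝒬ₛ = {Q_A : A ∈ 𝕋}`, assuming the off-diagonal counts `n_xy⁽ᵐ⁾` are
eventually equal to `n_xy` and `δ⁽ᵐ⁾·n_x⁽ᵐ⁾ → d_x > 0` with `δ⁽ᵐ⁾ = tmax/m`. -/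
theorem stmt_13 (S : Type*) [Fintype S] [DecidableEq S]
    (tmax : ℝ) (htmax : 0 < tmax) (s : ℝ) (hs : 0 ≤ s)
    (ndisc : ℕ → S → S → ℕ)
    (nrow : ℕ → S → ℕ) (hnrow : ∀ m x, nrow m x = ∑ y, ndisc m x y)
    (n : S → S → ℝ)
    (hn : ∀ x y, x ≠ y → ∀ᶠ m in atTop, (ndisc m x y : ℝ) = n x y)
    (d : S → ℝ) (hd : ∀ x, 0 < d x)
    (hdn : ∀ x, Tendsto (fun m : ℕ => (tmax / m) * (nrow m x : ℝ)) atTop (nhds (d x)))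
    (Qs : Set (Matrix S S ℝ))
    (hQs : Qs = {Q | ∃ A : Matrix S S ℝ,
      (∀ x y, 0 ≤ A x y) ∧ (∀ x, ∑ y, A x y = 1) ∧
      (∀ x y, Q x y =
        if x = y then -∑ z ∈ Finset.univ.erase x, (s * A x z + n x z) / d x
        else (s * A x y + n x y) / d x)})
    (Qsm : ℕ → Set (Matrix S S ℝ))
    (hQsm : ∀ m, Qsm m = {Q | ∃ A : Matrix S S ℝ,
      (∀ x y, 0 < A x y) ∧ (∀ x, ∑ y, A x y = 1) ∧
      (∀ x y, Q x y =
        ((s * A x y + (ndisc m x y : ℝ)) / (s + (nrow m x : ℝ))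
          - (if x = y then (1 : ℝ) else 0)) / (tmax / m))}) :
    ∀ Qseq : ℕ → Matrix S S ℝ,
      (∀ m : ℕ, 0 < m → Qseq m ∈ Qsm m) →
      ∀ (φ : ℕ → ℕ), StrictMono φ →
      ∀ Qlim : Matrix S S ℝ,
        Tendsto (fun k => Qseq (φ k)) atTop (nhds Qlim) → Qlim ∈ Qs :=
  stmt_13_general S tmax s ndisc nrow hnrow n hn d hd hdn Qs hQs Qsm hQsm
end
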